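/- (Carlitz's insertion lemma.) Fix n ≥ 2 and σ ∈ 𝔖_{n−1}. For 0 ≤ g ≤ n−1, let ins_g(σ) ∈ 𝔖_n be the permutation σ_1 ⋯ σ_g n σ_{g+1} ⋯ σ_{n−1} obtained by inserting n immediately after position g (at the front when g = 0). Then the map g ↦ maj(ins_g(σ)) − maj(σ) is a bijection from {0, 1, …, n−1} to {0, 1, …, n−1}; equivalently, the multiset {maj(τ) : τ ∈ 𝔖_n is obtained from σ by inserting n into one of its n gaps} equals {maj(σ), maj(σ)+1, …, maj(σ)+n−1}. -/

import Mathlib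

open Finset

/-- One-line notation: `oneline σ i` is the value σ_i ∈ {1,…,n} at position i ∈ {1,…,n}. -/
def oneline {n : ℕ} (σ : Equiv.Perm (Fin n)) (i : ℕ) : ℕ :=
  if h : 1 ≤ i ∧ i ≤ n then (σ ⟨i - 1, by omega⟩ : ℕ) + 1 else 0

/-- The descent set Des(σ) = {i ∈ {1,…,n−1} : σ_i > σ_{i+1}}. -/
def DesSet {n : ℕ} (σ : Equiv.Perm (Fin n)) : Finset ℕ :=
  (Finset.Icc 1 (n - 1)).filter fun i => oneline σ (i + 1) < oneline σ i

/-- The ascent set Asc(σ) = {i ∈ {1,…,n−1} : σ_i < σ_{i+1}}. -/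
def AscSet {n : ℕ} (σ : Equiv.Perm (Fin n)) : Finset ℕ :=
  (Finset.Icc 1 (n - 1)).filter fun i => oneline σ i < oneline σ (i + 1)

/-- maj(σ) = Σ_{i ∈ Des(σ)} i. -/
def majNum {n : ℕ} (σ : Equiv.Perm (Fin n)) : ℕ := ∑ i ∈ DesSet σ, i

/-- des(σ) = |Des(σ)|. -/
def desNum {n : ℕ} (σ : Equiv.Perm (Fin n)) : ℕ := (DesSet σ).card

/-- inv(σ) = #{(i,j) : 1 ≤ i < j ≤ n, σ_i > σ_j}. -/
def invNum {n : ℕ} (σ : Equiv.Perm (Fin n)) : ℕ :=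
  ((Finset.Icc 1 n ×ˢ Finset.Icc 1 n).filter fun p =>
    p.1 < p.2 ∧ oneline σ p.2 < oneline σ p.1).card

/-- coinv(σ) = #{(i,j) : 1 ≤ i < j ≤ n, σ_i < σ_j}. -/
def coinvNum {n : ℕ} (σ : Equiv.Perm (Fin n)) : ℕ :=
  ((Finset.Icc 1 n ×ˢ Finset.Icc 1 n).filter fun p =>
    p.1 < p.2 ∧ oneline σ p.1 < oneline σ p.2).card

/-- inv^{□,j}(σ) = #{i : 1 ≤ i < j, σ_i > σ_j}, inversions ending at position j. -/
def invEnd {n : ℕ} (σ : Equiv.Perm (Fin n)) (j : ℕ) : ℕ :=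
  ((Finset.Icc 1 n).filter fun i => i < j ∧ oneline σ j < oneline σ i).card

/-- inv^{i,□}(σ) = #{j : i < j ≤ n, σ_i > σ_j}, inversions starting at position i. -/
def invStart {n : ℕ} (σ : Equiv.Perm (Fin n)) (i : ℕ) : ℕ :=
  ((Finset.Icc 1 n).filter fun j => i < j ∧ oneline σ j < oneline σ i).card

/-- [m]_q = 1 + q + ⋯ + q^{m−1}. -/
def qnum {R : Type*} [CommRing R] (q : R) (m : ℕ) : R := ∑ i ∈ Finset.range m, q ^ i

/-- [m]_q! = [1]_q [2]_q ⋯ [m]_q, with [0]_q! = 1. -/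
def qfact {R : Type*} [CommRing R] (q : R) (m : ℕ) : R := ∏ i ∈ Finset.range m, qnum q (i + 1)

/-- q-Stirling numbers: S_{0,0}(q)=1, S_{n,k}(q)=0 for k<0 or k>n, and
S_{n+1,k}(q) = S_{n,k−1}(q) + [k]_q S_{n,k}(q). -/
def qStirling {R : Type*} [CommRing R] (q : R) : ℕ → ℕ → R
  | 0, 0 => 1
  | 0, _ + 1 => 0
  | _ + 1, 0 => 0
  | n + 1, k + 1 => qStirling q n k + qnum q (k + 1) * qStirling q n (k + 1)

/-- The set of star-sets of size k inside a given finite set (e.g. the descent set). -/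
def starSets (D : Finset ℕ) (k : ℕ) : Finset (Finset ℕ) :=
  D.powerset.filter fun S => S.card = k

/-- inv((σ,S)) = inv(σ) − Σ_{i∈S} (1 + inv^{□,i}(σ)) for a descent-starred permutation. -/
def starInv {n : ℕ} (σ : Equiv.Perm (Fin n)) (S : Finset ℕ) : ℕ :=
  invNum σ - ∑ i ∈ S, (1 + invEnd σ i)

/-- maj((σ,S)) = maj(σ) − Σ_{i∈S} |Des(σ) ∩ {i,…,n−1}| for a descent-starred permutation. -/
def starMaj {n : ℕ} (σ : Equiv.Perm (Fin n)) (S : Finset ℕ) : ℕ :=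
  majNum σ - ∑ i ∈ S, (DesSet σ ∩ Finset.Icc i (n - 1)).card

/-- Gaussian binomial coefficients: binom_q(m,0)=1, binom_q(m,r)=0 for r>m, and
binom_q(m,r) = binom_q(m−1,r−1) + q^r · binom_q(m−1,r). -/
def qbinom {R : Type*} [CommRing R] (q : R) : ℕ → ℕ → R
  | _, 0 => 1
  | 0, _ + 1 => 0
  | m + 1, r + 1 => qbinom q m r + q ^ (r + 1) * qbinom q m (r + 1)

/-- A_{n,j}(q) = Σ_{σ ∈ 𝔖_n, des(σ)=j} q^{maj(σ)}. -/
def eulerA {R : Type*} [CommRing R] (q : R) (n j : ℕ) : R :=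
  ∑ σ ∈ (Finset.univ : Finset (Equiv.Perm (Fin n))).filter (fun σ => desNum σ = j),
    q ^ majNum σ

/-- [m]_{p,q} = p^{m−1} + p^{m−2} q + ⋯ + p q^{m−2} + q^{m−1}. -/
def pqnum {R : Type*} [CommRing R] (p q : R) (m : ℕ) : R :=
  ∑ i ∈ Finset.range m, p ^ (m - 1 - i) * q ^ i

/-- [m]_{p,q}! = [1]_{p,q} [2]_{p,q} ⋯ [m]_{p,q}. -/
def pqfact {R : Type*} [CommRing R] (p q : R) (m : ℕ) : R :=
  ∏ i ∈ Finset.range m, pqnum p q (i + 1)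

/-- p,q-Stirling numbers: S_{0,0}(p,q)=1, S_{n,k}(p,q)=0 for k<0 or k>n, and
S_{n+1,k}(p,q) = S_{n,k−1}(p,q) + [k]_{p,q} S_{n,k}(p,q). -/
def pqStirling {R : Type*} [CommRing R] (p q : R) : ℕ → ℕ → R
  | 0, 0 => 1
  | 0, _ + 1 => 0
  | _ + 1, 0 => 0
  | n + 1, k + 1 => pqStirling p q n k + pqnum p q (k + 1) * pqStirling p q n (k + 1)

/-- `IsInsertion σ g τ` says that τ ∈ 𝔖_{m+1} is the permutation
σ_1 ⋯ σ_g (m+1) σ_{g+1} ⋯ σ_m obtained from σ ∈ 𝔖_m by inserting the largest letter m+1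
immediately after position g (at the front when g = 0). -/
def IsInsertion {m : ℕ} (σ : Equiv.Perm (Fin m)) (g : ℕ) (τ : Equiv.Perm (Fin (m + 1))) :
    Prop :=
  g ≤ m ∧ (∀ i, 1 ≤ i → i ≤ g → oneline τ i = oneline σ i) ∧
    oneline τ (g + 1) = m + 1 ∧
    (∀ i, g + 2 ≤ i → i ≤ m + 1 → oneline τ i = oneline σ (i - 1))

/-!
Inserting the largest letter `m + 1` into gap `g` of `σ` keeps the descents before `g`, destroys
a descent at `g`, shifts every descent after `g` one step to the right and, unless `g = m`,
creates a new descent at `g + 1`. With `k` the number of descents of `σ` after `g`, maj therefore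
grows by `0` at the last gap, by `k + 1` at a descent `g`, and by `g + 1 + k` at any other gap.
The first two kinds of gaps receive `0, 1, …, des σ` from right to left, the remaining ones
`des σ + 1, …, m` from left to right, so every value in `{0, …, m}` is hit exactly once.
-/

section Insertion

open Equiv

variable {m : ℕ}

theorem oneline_eq (σ : Perm (Fin m)) {i : ℕ} (h1 : 1 ≤ i) (h2 : i ≤ m) :
    oneline σ i = σ ⟨i - 1, by omega⟩ + 1 :=
  dif_pos ⟨h1, h2⟩

theorem oneline_le (σ : Perm (Fin m)) (i : ℕ) : oneline σ i ≤ m := by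
  unfold oneline
  split
  · exact (σ _).isLt
  · omega

theorem Equiv.Perm.ext_of_oneline {σ τ : Perm (Fin m)}
    (h : ∀ i, 1 ≤ i → i ≤ m → oneline σ i = oneline τ i) : σ = τ := by
  ext j
  have := h (j + 1) (by omega) (by omega)
  rwa [oneline_eq _ (by omega) (by omega), oneline_eq _ (by omega) (by omega),
    add_left_inj] at this

/-- `σ` with the letter `m + 1` inserted at the (0-indexed) position `p`. -/
noncomputable def insertTop (σ : Perm (Fin m)) (p : Fin (m + 1)) : Perm (Fin (m + 1)) :=
  Equiv.ofBijective (p.insertNth (Fin.last m) (Fin.castSucc ∘ σ)) <| by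
    rw [← Finite.injective_iff_bijective, ← Fin.cons_comp_cycleRange]
    refine (Fin.cons_injective_of_injective ?_ ?_).comp p.cycleRange.injective
    · rintro ⟨j, hj⟩
      exact (Fin.castSucc_lt_last (σ j)).ne hj
    · exact (Fin.castSucc_injective m).comp σ.injective

theorem insertTop_apply_self (σ : Perm (Fin m)) (p : Fin (m + 1)) :
    insertTop σ p p = Fin.last m :=
  Fin.insertNth_apply_same (α := fun _ => Fin (m + 1)) _ _ _

theorem insertTop_apply_succAbove (σ : Perm (Fin m)) (p : Fin (m + 1)) (j : Fin m) :
    insertTop σ p (p.succAbove j) = (σ j).castSucc :=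
  Fin.insertNth_apply_succAbove (α := fun _ => Fin (m + 1)) _ _ _ _

theorem isInsertion_insertTop (σ : Perm (Fin m)) {g : ℕ} (hg : g ≤ m) :
    IsInsertion σ g (insertTop σ ⟨g, by omega⟩) := by
  refine ⟨hg, fun i hi1 hig => ?_, ?_, fun i hgi him => ?_⟩
  · have hpos : (⟨i - 1, by omega⟩ : Fin (m + 1)) =
        Fin.succAbove ⟨g, by omega⟩ ⟨i - 1, by omega⟩ :=
      (Fin.succAbove_of_castSucc_lt ⟨g, by omega⟩ ⟨i - 1, by omega⟩
        (by simp only [Fin.lt_def, Fin.val_castSucc]; omega)).symm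
    rw [oneline_eq _ hi1 (by omega), oneline_eq _ hi1 (by omega), hpos,
      insertTop_apply_succAbove, Fin.val_castSucc]
  · rw [oneline_eq _ (by omega) (by omega)]
    simp only [add_tsub_cancel_right, insertTop_apply_self, Fin.val_last]
  · have hpos : (⟨i - 1, by omega⟩ : Fin (m + 1)) =
        Fin.succAbove ⟨g, by omega⟩ ⟨i - 2, by omega⟩ := by
      rw [Fin.succAbove_of_le_castSucc _ _ (by simp only [Fin.le_def, Fin.val_castSucc]; omega)]
      ext
      simp only [Fin.succ_mk]
      omega
    rw [oneline_eq _ (by omega) him, oneline_eq _ (by omega) (by omega), hpos,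
      insertTop_apply_succAbove, Fin.val_castSucc]
    rfl

theorem IsInsertion.unique {σ : Perm (Fin m)} {g : ℕ} {τ τ' : Perm (Fin (m + 1))}
    (h : IsInsertion σ g τ) (h' : IsInsertion σ g τ') : τ = τ' := by
  obtain ⟨-, hlow, hmid, hhigh⟩ := h
  obtain ⟨-, hlow', hmid', hhigh'⟩ := h'
  refine Equiv.Perm.ext_of_oneline fun i hi1 him => ?_
  rcases lt_trichotomy i (g + 1) with hlt | rfl | hgt
  · rw [hlow i hi1 (by omega), hlow' i hi1 (by omega)]
  · rw [hmid, hmid']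
  · rw [hhigh i (by omega) him, hhigh' i (by omega) him]

theorem mem_desSet {n : ℕ} {σ : Perm (Fin n)} {i : ℕ} :
    i ∈ DesSet σ ↔ (1 ≤ i ∧ i ≤ n - 1) ∧ oneline σ (i + 1) < oneline σ i := by
  rw [DesSet, mem_filter, mem_Icc]

theorem desSet_subset (σ : Perm (Fin m)) : DesSet σ ⊆ Icc 1 (m - 1) :=
  filter_subset _ _

variable {σ : Perm (Fin m)} {g : ℕ} {τ : Perm (Fin (m + 1))}

theorem IsInsertion.desSet_eq_of_last_gap (hτ : IsInsertion σ m τ) : DesSet τ = DesSet σ := by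
  obtain ⟨-, hlow, hmid, -⟩ := hτ
  ext i
  simp only [mem_desSet, Nat.add_sub_cancel]
  constructor
  · rintro ⟨⟨hi1, him⟩, hdes⟩
    obtain rfl | hlt := him.eq_or_lt
    · rw [hmid, hlow i hi1 le_rfl] at hdes
      exact absurd hdes (by have := oneline_le σ i; omega)
    · rw [hlow i hi1 hlt.le, hlow (i + 1) (by omega) hlt] at hdes
      exact ⟨⟨hi1, by omega⟩, hdes⟩
  · rintro ⟨⟨hi1, him⟩, hdes⟩
    refine ⟨⟨hi1, by omega⟩, ?_⟩
    rwa [hlow i hi1 (by omega), hlow (i + 1) (by omega) (by omega)]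

theorem IsInsertion.desSet_eq_of_lt (hτ : IsInsertion σ g τ) (hg : g < m) :
    DesSet τ = {d ∈ DesSet σ | d < g} ∪ (insert g {d ∈ DesSet σ | g < d}).image (· + 1) := by
  obtain ⟨-, hlow, hmid, hhigh⟩ := hτ
  have hsucc : ∀ d, g < d → d ≤ m → oneline τ (d + 1) = oneline σ d := fun d hgd hdm => by
    simpa using hhigh (d + 1) (by omega) (by omega)
  ext i
  simp only [mem_union, mem_filter, mem_image, mem_insert, mem_desSet, Nat.add_sub_cancel]
  constructor
  · rintro ⟨⟨hi1, him⟩, hdes⟩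
    rcases lt_trichotomy i g with hig | rfl | hgi
    · rw [hlow i hi1 hig.le, hlow (i + 1) (by omega) hig] at hdes
      exact Or.inl ⟨⟨⟨hi1, by omega⟩, hdes⟩, hig⟩
    · rw [hmid, hlow i hi1 le_rfl] at hdes
      exact absurd hdes (by have := oneline_le σ i; omega)
    · obtain ⟨j, rfl⟩ : ∃ j, i = j + 1 := ⟨i - 1, by omega⟩
      refine Or.inr ⟨j, ?_, rfl⟩
      obtain rfl | hgj := (Nat.le_of_lt_succ hgi).eq_or_lt
      · exact Or.inl rfl
      · rw [hsucc j hgj (by omega), hsucc (j + 1) (by omega) (by omega)] at hdes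
        exact Or.inr ⟨⟨⟨by omega, by omega⟩, hdes⟩, hgj⟩
  · rintro (⟨⟨⟨hi1, him⟩, hdes⟩, hig⟩ | ⟨d, rfl | ⟨⟨⟨hd1, hdm⟩, hdes⟩, hgd⟩, rfl⟩)
    · refine ⟨⟨hi1, by omega⟩, ?_⟩
      rwa [hlow i hi1 hig.le, hlow (i + 1) (by omega) hig]
    · refine ⟨⟨by omega, by omega⟩, ?_⟩
      rw [hmid, hsucc (d + 1) (by omega) (by omega)]
      have := oneline_le σ (d + 1)
      omega
    · refine ⟨⟨by omega, by omega⟩, ?_⟩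
      rwa [hsucc d hgd (by omega), hsucc (d + 1) (by omega) (by omega)]

theorem Finset.sum_eq_sum_lt_add_ite_add_sum_gt (s : Finset ℕ) (g : ℕ) :
    ∑ x ∈ s, x = ∑ x ∈ s with x < g, x + (if g ∈ s then g else 0) + ∑ x ∈ s with g < x, x := by
  rw [sum_filter, sum_filter, ← sum_ite_eq' s g (fun x => x), ← sum_add_distrib,
    ← sum_add_distrib]
  refine sum_congr rfl fun x _ => ?_
  split_ifs <;> omega

/-- By how much inserting the largest letter at gap `g` raises the major index of a permutation
of `{1, …, m}` with descent set `D`. -/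
def majIncrement (D : Finset ℕ) (m g : ℕ) : ℕ :=
  if g = m then 0 else if g ∈ D then #{d ∈ D | g < d} + 1 else g + 1 + #{d ∈ D | g < d}

theorem IsInsertion.majNum_eq (hτ : IsInsertion σ g τ) :
    majNum τ = majNum σ + majIncrement (DesSet σ) m g := by
  obtain rfl | hg := hτ.1.eq_or_lt
  · rw [majNum, majNum, hτ.desSet_eq_of_last_gap, majIncrement, if_pos rfl, add_zero]
  have hgD : g ∉ {d ∈ DesSet σ | g < d} := by simp
  rw [majNum, majNum, hτ.desSet_eq_of_lt hg, sum_union, sum_image (by simp), sum_insert hgD,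
    sum_add_distrib, sum_const, smul_eq_mul, mul_one,
    sum_eq_sum_lt_add_ite_add_sum_gt (DesSet σ) g, majIncrement, if_neg hg.ne]
  · split_ifs <;> omega
  · rw [disjoint_left]
    simp only [mem_filter, mem_image, mem_insert]
    omega

end Insertion

section Increment

variable {D : Finset ℕ} {m a b : ℕ}

theorem card_filter_gt_lt_card (ha : a ∈ D) : #{d ∈ D | a < d} < #D :=
  card_lt_card (filter_ssubset.2 ⟨a, ha, lt_irrefl a⟩)

theorem card_filter_gt_le (hD : D ⊆ Icc 1 (m - 1)) (a : ℕ) : #{d ∈ D | a < d} ≤ m - 1 - a := by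
  have hsub : {d ∈ D | a < d} ⊆ Ioo a m := fun d hd => by
    have := mem_Icc.1 (hD (mem_filter.1 hd).1)
    rw [mem_Ioo]
    exact ⟨(mem_filter.1 hd).2, by omega⟩
  simpa [Nat.card_Ioo, Nat.sub_right_comm] using card_le_card hsub

theorem card_le_add_card_filter_gt (h0 : 0 ∉ D) (a : ℕ) : #D ≤ a + #{d ∈ D | a < d} := by
  have hsub : {d ∈ D | ¬a < d} ⊆ Icc 1 a := fun d hd => by
    rw [mem_filter] at hd
    rw [mem_Icc]
    exact ⟨Nat.pos_of_ne_zero (ne_of_mem_of_not_mem hd.1 h0), not_lt.1 hd.2⟩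
  have := card_le_card hsub
  rw [Nat.card_Icc, add_tsub_cancel_right] at this
  have := card_filter_add_card_filter_not (s := D) (p := fun d => a < d)
  omega

theorem card_filter_gt_lt_of_mem (hb : b ∈ D) (hab : a < b) :
    #{d ∈ D | b < d} < #{d ∈ D | a < d} := by
  refine card_lt_card ⟨monotone_filter_right D fun d _ hbd => hab.trans hbd, fun hsub => ?_⟩
  simpa using hsub (mem_filter.2 ⟨hb, hab⟩)

theorem add_card_filter_gt_lt_of_not_mem (hb : b ∉ D) (hab : a < b) :
    a + #{d ∈ D | a < d} < b + #{d ∈ D | b < d} := by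
  have hsub : {d ∈ D | a < d} ⊆ {d ∈ D | b < d} ∪ Ioo a b := fun d hd => by
    rw [mem_filter] at hd
    rw [mem_union, mem_filter, mem_Ioo]
    rcases lt_trichotomy b d with hbd | rfl | hdb
    · exact Or.inl ⟨hd.1, hbd⟩
    · exact absurd hd.1 hb
    · exact Or.inr ⟨hd.2, hdb⟩
  have := (card_le_card hsub).trans (card_union_le _ _)
  rw [Nat.card_Ioo] at this
  omega

theorem majIncrement_le (hD : D ⊆ Icc 1 (m - 1)) (ha : a ≤ m) : majIncrement D m a ≤ m := by
  have hcard : #D ≤ m - 1 := by simpa using card_le_card hD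
  unfold majIncrement
  split_ifs with ham haD
  · exact Nat.zero_le m
  · have := card_filter_gt_lt_card haD
    omega
  · have := card_filter_gt_le hD a
    omega

theorem majIncrement_ne_of_lt (hD : D ⊆ Icc 1 (m - 1)) (hab : a < b) (hb : b ≤ m) :
    majIncrement D m a ≠ majIncrement D m b := by
  have h0 : 0 ∉ D := fun h => by simpa using hD h
  unfold majIncrement
  rw [if_neg (by omega : a ≠ m)]
  split_ifs with haD hbm hbD hbm hbD
  · omega
  · have := card_filter_gt_lt_of_mem hbD hab
    omega
  · have := card_filter_gt_lt_card haD
    have := card_le_add_card_filter_gt h0 b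
    omega
  · omega
  · have := card_filter_gt_lt_card hbD
    have := card_le_add_card_filter_gt h0 a
    omega
  · have := add_card_filter_gt_lt_of_not_mem hbD hab
    omega

theorem majIncrement_bijOn (hD : D ⊆ Icc 1 (m - 1)) :
    Set.BijOn (majIncrement D m) (Set.Iic m) (Set.Iic m) := by
  refine (Set.Finite.injOn_iff_bijOn_of_mapsTo (Set.finite_Iic m)
    fun a ha => majIncrement_le hD ha).1 fun a ha b hb hab => ?_
  by_contra hne
  rcases Nat.lt_or_gt_of_ne hne with hlt | hlt
  · exact majIncrement_ne_of_lt hD hlt hb hab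
  · exact majIncrement_ne_of_lt hD hlt ha hab.symm

end Increment

theorem statement19_general (m : ℕ) (σ : Equiv.Perm (Fin m)) :
    (∀ g ≤ m, ∃! τ : Equiv.Perm (Fin (m + 1)), IsInsertion σ g τ) ∧
    (∀ ins : ℕ → Equiv.Perm (Fin (m + 1)), (∀ g ≤ m, IsInsertion σ g (ins g)) →
      Set.BijOn (fun g => majNum (ins g) - majNum σ) (Set.Iic m) (Set.Iic m)) := by
  refine ⟨fun g hg => ⟨insertTop σ ⟨g, by omega⟩, isInsertion_insertTop σ hg,
    fun τ hτ => hτ.unique (isInsertion_insertTop σ hg)⟩, fun ins hins => ?_⟩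
  refine (majIncrement_bijOn (desSet_subset σ)).congr fun g hg => ?_
  rw [(hins g hg).majNum_eq, Nat.add_sub_cancel_left]

/-- Carlitz's insertion lemma: for n = m+1 ≥ 2 and σ ∈ 𝔖_m, each gap
g ∈ {0,…,m} admits a unique insertion ins_g(σ) ∈ 𝔖_{m+1} of the letter m+1, and the map
g ↦ maj(ins_g(σ)) − maj(σ) is a bijection from {0,1,…,m} to {0,1,…,m}. -/
theorem statement19 (m : ℕ) (hm : 1 ≤ m) (σ : Equiv.Perm (Fin m)) :
    (∀ g ≤ m, ∃! τ : Equiv.Perm (Fin (m + 1)), IsInsertion σ g τ) ∧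
    (∀ ins : ℕ → Equiv.Perm (Fin (m + 1)), (∀ g ≤ m, IsInsertion σ g (ins g)) →
      Set.BijOn (fun g => majNum (ins g) - majNum σ) (Set.Iic m) (Set.Iic m)) :=
  statement19_general m σ
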